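/- arXiv:1604.05339 — 2 statements merged into one kernel-verified Lean document; each statement's English description precedes it below -/
import Mathlib

section
/- For 0 < q < p ≤ 1, x ∈ [0,1], and n ≥ 1, the identity ∑_{k=0}^{n} [n choose k]_{p,q} p^{k(k-1)/2} x^k ∏_{s=0}^{n-k-1} (p^s − q^s x) = p^{n(n-1)/2} holds. -/
open Finset

noncomputable def pqInt (p q : ℝ) (m : ℕ) : ℝ :=
  ∑ i ∈ Finset.range m, p ^ (m - 1 - i) * q ^ i

noncomputable def pqFact (p q : ℝ) (n : ℕ) : ℝ :=
  ∏ j ∈ Finset.range n, pqInt p q (j + 1)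

noncomputable def pqChoose (p q : ℝ) (n k : ℕ) : ℝ :=
  pqFact p q n / (pqFact p q k * pqFact p q (n - k))

noncomputable def pqBasis (p q : ℝ) (n k : ℕ) (x : ℝ) : ℝ :=
  pqChoose p q n k * (p ^ (k * (k - 1) / 2) / p ^ (n * (n - 1) / 2)) * x ^ k *
    ∏ s ∈ Finset.range (n - k), (p ^ s - q ^ s * x)

noncomputable def pqNode (p q α β : ℝ) (n k : ℕ) : ℝ :=
  (p ^ (n - k) * pqInt p q k + α) / (pqInt p q n + β)

noncomputable def pqStancu (p q α β : ℝ) (n : ℕ) (f : ℝ → ℝ) (x : ℝ) : ℝ :=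
  ∑ k ∈ Finset.range (n + 1), pqBasis p q n k x * f (pqNode p q α β n k)

/-! The proof is an induction on `n` driven by the (p,q)-Pascal rule
`[n+1, k+1] = q^(n-k) [n, k] + p^(k+1) [n, k+1]`. Splitting every term of row `n + 1` this way and
peeling the last factor `p^(n-k-1) - q^(n-k-1) x` off the product in the second part, the row
`n + 1` sum regroups as `∑ₖ p^k (q^(n-k) x + (p^(n-k) - q^(n-k) x)) Tₙₖ = p^n ∑ₖ Tₙₖ`, and
`p^n p^(n(n-1)/2) = p^((n+1)n/2)`; here `Tₙₖ` is the `k`-th summand of row `n`. -/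

theorem Finset.sum_range_add_two_of_pascal {M : Type*} [AddCommMonoid M] (f a b : ℕ → M)
    (n : ℕ) (h_zero : f 0 = b 0) (h_succ : ∀ k < n, f (k + 1) = a k + b (k + 1))
    (h_top : f (n + 1) = a n) :
    ∑ k ∈ range (n + 2), f k = ∑ k ∈ range (n + 1), (a k + b k) := by
  rw [sum_range_succ', sum_range_succ, sum_add_distrib, sum_range_succ a,
    sum_range_succ' b, h_zero, h_top, sum_congr rfl fun k hk => h_succ k (mem_range.mp hk),
    sum_add_distrib]
  abel

lemma pqInt_add (p q : ℝ) (a b : ℕ) :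
    pqInt p q (a + b) = q ^ b * pqInt p q a + p ^ a * pqInt p q b := by
  rw [pqInt, add_comm a b, sum_range_add, add_comm, pqInt, pqInt, mul_sum, mul_sum]
  congr 1
  · refine sum_congr rfl fun i _ => ?_
    rw [show b + a - 1 - (b + i) = a - 1 - i by omega, pow_add]
    ring
  · refine sum_congr rfl fun i hi => ?_
    rw [show b + a - 1 - i = a + (b - 1 - i) by have := mem_range.mp hi; omega, pow_add]
    ring

lemma pqInt_succ_pos {p q : ℝ} (hp : 0 < p) (hq : 0 < q) (m : ℕ) : 0 < pqInt p q (m + 1) :=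
  sum_pos (fun _ _ => by positivity) nonempty_range_add_one

lemma pqFact_ne_zero {p q : ℝ} (hne : ∀ m, pqInt p q (m + 1) ≠ 0) (n : ℕ) : pqFact p q n ≠ 0 :=
  prod_ne_zero_iff.mpr fun j _ => hne j

lemma pqFact_zero (p q : ℝ) : pqFact p q 0 = 1 :=
  prod_range_zero _

lemma pqFact_succ (p q : ℝ) (n : ℕ) : pqFact p q (n + 1) = pqFact p q n * pqInt p q (n + 1) :=
  prod_range_succ _ _

lemma pqChoose_zero_right {p q : ℝ} (hne : ∀ m, pqInt p q (m + 1) ≠ 0) (n : ℕ) :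
    pqChoose p q n 0 = 1 := by
  rw [pqChoose, Nat.sub_zero, pqFact_zero, one_mul, div_self (pqFact_ne_zero hne n)]

lemma pqChoose_self {p q : ℝ} (hne : ∀ m, pqInt p q (m + 1) ≠ 0) (n : ℕ) :
    pqChoose p q n n = 1 := by
  rw [pqChoose, Nat.sub_self, pqFact_zero, mul_one, div_self (pqFact_ne_zero hne n)]

lemma pqChoose_succ_succ {p q : ℝ} (hne : ∀ m, pqInt p q (m + 1) ≠ 0) {n k : ℕ} (hk : k < n) :
    pqChoose p q (n + 1) (k + 1) =
      q ^ (n - k) * pqChoose p q n k + p ^ (k + 1) * pqChoose p q n (k + 1) := by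
  obtain ⟨d, rfl⟩ : ∃ d, n = k + 1 + d := ⟨n - (k + 1), by omega⟩
  have hsplit : pqInt p q (k + 1 + d + 1) =
      q ^ (d + 1) * pqInt p q (k + 1) + p ^ (k + 1) * pqInt p q (d + 1) :=
    pqInt_add p q (k + 1) (d + 1)
  rw [pqChoose, pqChoose, pqChoose, show k + 1 + d - k = d + 1 by omega,
    show k + 1 + d - (k + 1) = d by omega, show k + 1 + d + 1 - (k + 1) = d + 1 by omega,
    pqFact_succ, pqFact_succ p q k, pqFact_succ p q d, hsplit]
  field_simp [pqFact_ne_zero hne, hne]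

noncomputable def pqTerm (p q x : ℝ) (n k : ℕ) : ℝ :=
  pqChoose p q n k * p ^ (k * (k - 1) / 2) * x ^ k *
    ∏ s ∈ range (n - k), (p ^ s - q ^ s * x)

lemma pqTerm_succ_zero {p q : ℝ} (hne : ∀ m, pqInt p q (m + 1) ≠ 0) (x : ℝ) (n : ℕ) :
    pqTerm p q x (n + 1) 0 = (p ^ n - q ^ n * x) * pqTerm p q x n 0 := by
  simp only [pqTerm, pqChoose_zero_right hne, Nat.sub_zero, prod_range_succ]
  ring

lemma pqTerm_succ_self {p q : ℝ} (hne : ∀ m, pqInt p q (m + 1) ≠ 0) (x : ℝ) (n : ℕ) :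
    pqTerm p q x (n + 1) (n + 1) = p ^ n * x * pqTerm p q x n n := by
  simp only [pqTerm, pqChoose_self hne, Nat.sub_self, Nat.triangle_succ, pow_add, pow_succ]
  ring

lemma pqTerm_succ_succ {p q : ℝ} (hne : ∀ m, pqInt p q (m + 1) ≠ 0) (x : ℝ) {n k : ℕ}
    (hk : k < n) :
    pqTerm p q x (n + 1) (k + 1) = p ^ k * q ^ (n - k) * x * pqTerm p q x n k +
      p ^ (k + 1) * (p ^ (n - (k + 1)) - q ^ (n - (k + 1)) * x) * pqTerm p q x n (k + 1) := by
  have hnk : n - k = n - (k + 1) + 1 := by omega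
  simp only [pqTerm, pqChoose_succ_succ hne hk, Nat.triangle_succ, Nat.add_sub_add_right]
  rw [hnk, prod_range_succ, pow_add]
  ring

theorem sum_pqTerm {p q : ℝ} (hne : ∀ m, pqInt p q (m + 1) ≠ 0) (x : ℝ) (n : ℕ) :
    ∑ k ∈ range (n + 1), pqTerm p q x n k = p ^ (n * (n - 1) / 2) := by
  induction n with
  | zero => simp [pqTerm, pqChoose_self hne]
  | succ n ih =>
    have hsplit := sum_range_add_two_of_pascal (pqTerm p q x (n + 1))
      (fun k => p ^ k * q ^ (n - k) * x * pqTerm p q x n k)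
      (fun k => p ^ k * (p ^ (n - k) - q ^ (n - k) * x) * pqTerm p q x n k) n
      (by simpa using pqTerm_succ_zero hne x n)
      (fun k hk => by simpa using pqTerm_succ_succ hne x hk)
      (by simpa using pqTerm_succ_self hne x n)
    have hcollect : ∀ k ∈ range (n + 1), p ^ k * q ^ (n - k) * x * pqTerm p q x n k +
        p ^ k * (p ^ (n - k) - q ^ (n - k) * x) * pqTerm p q x n k = p ^ n * pqTerm p q x n k := by
      intro k hk
      rw [← pow_mul_pow_sub p (Nat.lt_succ_iff.mp (mem_range.mp hk))]
      ring
    rw [hsplit, sum_congr rfl hcollect, ← mul_sum, ih, ← pow_add, Nat.triangle_succ, add_comm]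

theorem pq_bernstein_partition_general (p q x : ℝ) (hq : 0 < q) (hqp : q < p) (n : ℕ) :
    ∑ k ∈ Finset.range (n + 1),
        pqChoose p q n k * p ^ (k * (k - 1) / 2) * x ^ k *
          ∏ s ∈ Finset.range (n - k), (p ^ s - q ^ s * x) =
      p ^ (n * (n - 1) / 2) :=
  sum_pqTerm (fun m => (pqInt_succ_pos (hq.trans hqp) hq m).ne') x n

theorem pq_bernstein_partition (p q x : ℝ) (hq : 0 < q) (hqp : q < p) (hp : p ≤ 1)
    (hx : x ∈ Set.Icc (0 : ℝ) 1) (n : ℕ) (hn : 1 ≤ n) :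
    ∑ k ∈ Finset.range (n + 1),
        pqChoose p q n k * p ^ (k * (k - 1) / 2) * x ^ k *
          ∏ s ∈ Finset.range (n - k), (p ^ s - q ^ s * x) =
      p ^ (n * (n - 1) / 2) :=
  pq_bernstein_partition_general p q x hq hqp n
end

section
/- Let (p_n), (q_n) be sequences with 0 < q_n < p_n ≤ 1 for all n, p_n → 1, q_n → 1, p_n^n → 1, q_n^n → 1. Then [n]_{p_n,q_n} → ∞ as n → ∞. -/
open Finset

theorem pqInt_tendsto_atTop (p q : ℕ → ℝ)
    (hq : ∀ n, 0 < q n) (hqp : ∀ n, q n < p n) (hp : ∀ n, p n ≤ 1)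
    (hp1 : Filter.Tendsto p Filter.atTop (nhds 1))
    (hq1 : Filter.Tendsto q Filter.atTop (nhds 1))
    (hpn : Filter.Tendsto (fun n => p n ^ n) Filter.atTop (nhds 1))
    (hqn : Filter.Tendsto (fun n => q n ^ n) Filter.atTop (nhds 1)) :
    Filter.Tendsto (fun n => pqInt (p n) (q n) n) Filter.atTop Filter.atTop := by
  have hqle1 : ∀ n, q n ≤ 1 := fun n => le_of_lt (lt_of_lt_of_le (hqp n) (hp n))
  have hp0 : ∀ n, 0 < p n := fun n => lt_trans (hq n) (hqp n)
  -- product p^n * q^n → 1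
  have hprod : Filter.Tendsto (fun n => p n ^ n * q n ^ n) Filter.atTop (nhds 1) := by
    have := hpn.mul hqn
    simpa using this
  have hev : ∀ᶠ n in Filter.atTop, (1:ℝ)/2 ≤ p n ^ n * q n ^ n := by
    exact hprod.eventually (eventually_ge_nhds (by norm_num : (1:ℝ)/2 < 1))
  have hbound : ∀ᶠ n : ℕ in Filter.atTop, (n:ℝ)/2 ≤ pqInt (p n) (q n) n := by
    filter_upwards [hev] with n hn
    have hterm : ∀ i ∈ Finset.range n, p n ^ n * q n ^ n ≤ p n ^ (n - 1 - i) * q n ^ i := by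
      intro i hi
      have hi' : i < n := Finset.mem_range.mp hi
      have h1 : p n ^ n ≤ p n ^ (n - 1 - i) :=
        pow_le_pow_of_le_one (le_of_lt (hp0 n)) (hp n) (by omega)
      have h2 : q n ^ n ≤ q n ^ i :=
        pow_le_pow_of_le_one (le_of_lt (hq n)) (hqle1 n) (by omega)
      exact mul_le_mul h1 h2 (pow_nonneg (le_of_lt (hq n)) n) (pow_nonneg (le_of_lt (hp0 n)) _)
    have hsum : (n:ℝ) * (p n ^ n * q n ^ n) ≤ pqInt (p n) (q n) n := by
      unfold pqInt
      calc (n:ℝ) * (p n ^ n * q n ^ n)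
          = ∑ _i ∈ Finset.range n, p n ^ n * q n ^ n := by
            rw [Finset.sum_const, Finset.card_range, nsmul_eq_mul]
        _ ≤ _ := Finset.sum_le_sum hterm
    calc (n:ℝ)/2 = (n:ℝ) * (1/2) := by ring
      _ ≤ (n:ℝ) * (p n ^ n * q n ^ n) :=
          mul_le_mul_of_nonneg_left hn (Nat.cast_nonneg n)
      _ ≤ _ := hsum
  have hhalf : Filter.Tendsto (fun n : ℕ => (n:ℝ)/2) Filter.atTop Filter.atTop :=
    (tendsto_natCast_atTop_atTop).atTop_div_const (by norm_num)
  exact Filter.tendsto_atTop_mono' _ hbound hhalf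
end
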